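/- Let G = (V,E) be a finite simple graph of maximum degree at most Δ ≥ 1 and let v₁, v₂ ∈ V be distinct. For any real α ∈ [1, e), the double-rooted tree generating function satisfies T_{G,v₁,v₂}(ln α/(αΔ)) ≤ α·ln α/(Δ(1 − ln α)). -/

import Mathlib

/-!
Let `S_v(x)` be the generating function of the subtrees containing `v`. A tree counted by
`S_v` consists of the edges it uses at `v` together with, at each neighbour `w` reached, a
(possibly empty) subtree of `G - v` rooted at `w`; by induction on the number of edges,
`S_v(x) ≤ α - 1` whenever `(1 + xα)^Δ ≤ α`. In the same way a tree containing `v₁` and `v₂`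
is its `v₁v₂`-path plus one rooted subtree at each vertex of the path, so a path with `n`
edges contributes at most `x^n α^(n+1)`, and there are at most `Δ^(n-1)` such paths. At
`x = ln α / (αΔ)` we have `(1 + xα)^Δ ≤ e^(ln α) = α`, and the bound is the geometric series
`(α/Δ) ∑_{n ≥ 1} (ln α)^n`.
-/

open Finset

attribute [local instance] Classical.propDecidable

variable {V : Type} [Fintype V] [DecidableEq V]

/-- Vertex support of an edge set: the non-isolated vertices. -/
def edgeSupp (F : Finset (Sym2 V)) : Finset V :=
  Finset.univ.filter fun v => ∃ e ∈ F, v ∈ e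

/-- `F` is (the edge set of) a subtree of `G`: a connected acyclic edge subset. -/
def IsSubtree (G : SimpleGraph V) (F : Finset (Sym2 V)) : Prop :=
  F ⊆ G.edgeFinset ∧ (SimpleGraph.fromEdgeSet (↑F : Set (Sym2 V))).IsAcyclic ∧
    ∀ a ∈ edgeSupp F, ∀ b ∈ edgeSupp F,
      (SimpleGraph.fromEdgeSet (↑F : Set (Sym2 V))).Reachable a b

/-- The double-rooted tree generating function `T_{G,v₁,v₂}(x)`: the sum of `x^{|T|}` over
all subtrees `T` of `G` whose vertex set contains both `v₁` and `v₂`. -/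
noncomputable def treeSum2 (G : SimpleGraph V) (v₁ v₂ : V) (x : ℝ) : ℝ :=
  ∑ F ∈ G.edgeFinset.powerset.filter
      (fun F => IsSubtree G F ∧ v₁ ∈ edgeSupp F ∧ v₂ ∈ edgeSupp F), x ^ F.card

open SimpleGraph

abbrev edgeGraph (F : Finset (Sym2 V)) : SimpleGraph V := fromEdgeSet (F : Set (Sym2 V))

section EdgeGraph

omit [Fintype V] [DecidableEq V]

variable {F : Finset (Sym2 V)}

lemma edgeGraph_adj {a b : V} : (edgeGraph F).Adj a b ↔ s(a, b) ∈ F ∧ a ≠ b := by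
  simp

lemma mem_edgeSet_edgeGraph {e : Sym2 V} :
    e ∈ (edgeGraph F).edgeSet ↔ e ∈ F ∧ ¬ e.IsDiag := by
  simp

lemma edgeGraph_mono {F' : Finset (Sym2 V)} (h : F ⊆ F') : edgeGraph F ≤ edgeGraph F' :=
  fromEdgeSet_mono (by simpa using h)

lemma edgeGraph_reachable_of_mem {e : Sym2 V} (he : e ∈ F) {a b : V} (ha : a ∈ e)
    (hb : b ∈ e) : (edgeGraph F).Reachable a b := by
  induction e with
  | h c d =>
    have hcd : (edgeGraph F).Reachable c d := by
      by_cases h : c = d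
      · exact h ▸ Reachable.refl c
      · exact (edgeGraph_adj.2 ⟨he, h⟩).reachable
    rw [Sym2.mem_iff] at ha hb
    rcases ha with rfl | rfl <;> rcases hb with rfl | rfl
    exacts [.refl _, hcd, hcd.symm, .refl _]

end EdgeGraph

lemma mem_edgeSupp {F : Finset (Sym2 V)} {v : V} : v ∈ edgeSupp F ↔ ∃ e ∈ F, v ∈ e := by
  simp [edgeSupp]

omit [DecidableEq V] in
lemma edgeGraph_le {F : Finset (Sym2 V)} {G : SimpleGraph V} (h : F ⊆ G.edgeFinset) :
    edgeGraph F ≤ G := by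
  intro a b hab
  simpa using h (edgeGraph_adj.1 hab).1

noncomputable def rootedTrees (G : SimpleGraph V) (v : V) : Finset (Finset (Sym2 V)) :=
  G.edgeFinset.powerset.filter fun F => IsSubtree G F ∧ v ∈ edgeSupp F

noncomputable def rootedTreeSum (G : SimpleGraph V) (v : V) (x : ℝ) : ℝ :=
  ∑ F ∈ rootedTrees G v, x ^ #F

section RootedTrees

variable {G : SimpleGraph V} {v : V} {x : ℝ}

lemma mem_rootedTrees {F : Finset (Sym2 V)} :
    F ∈ rootedTrees G v ↔ IsSubtree G F ∧ v ∈ edgeSupp F := by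
  simpa [rootedTrees] using fun h _ => h.1

lemma rootedTreeSum_nonneg (hx : 0 ≤ x) : 0 ≤ rootedTreeSum G v x :=
  sum_nonneg fun _ _ => pow_nonneg hx _

lemma sum_insert_empty_rootedTrees :
    ∑ B ∈ insert ∅ (rootedTrees G v), x ^ #B = 1 + rootedTreeSum G v x := by
  have : ∅ ∉ rootedTrees G v := fun h => by simpa [mem_edgeSupp] using (mem_rootedTrees.1 h).2
  rw [sum_insert this, card_empty, pow_zero, rootedTreeSum]

lemma rootedTrees_eq_empty (hv : ∀ w, ¬ G.Adj v w) : rootedTrees G v = ∅ := by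
  refine eq_empty_of_forall_notMem fun F hF => ?_
  obtain ⟨⟨hFG, -⟩, hvF⟩ := mem_rootedTrees.1 hF
  obtain ⟨e, he, hve⟩ := mem_edgeSupp.1 hvF
  obtain ⟨w, rfl⟩ := Sym2.mem_iff_exists.1 hve
  exact hv w (by simpa using hFG he)

lemma prod_one_add_rootedTreeSum_le {α : ℝ} (hx : 0 ≤ x)
    (hroot : ∀ u, rootedTreeSum G u x ≤ α - 1) (R : Finset V) :
    ∏ u ∈ R, (1 + rootedTreeSum G u x) ≤ α ^ #R := by
  rw [← prod_const]
  exact prod_le_prod (fun u _ => by linarith [rootedTreeSum_nonneg (G := G) (v := u) hx])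
    fun u _ => by linarith [hroot u]

end RootedTrees

def branch (F P : Finset (Sym2 V)) (u : V) : Finset (Sym2 V) :=
  (F \ P).filter fun e => ∃ z ∈ e, (edgeGraph (F \ P)).Reachable u z

section Branch

variable {F P : Finset (Sym2 V)} {R : Finset V} {u : V}

lemma mem_branch {e : Sym2 V} :
    e ∈ branch F P u ↔ e ∈ F \ P ∧ ∃ z ∈ e, (edgeGraph (F \ P)).Reachable u z :=
  mem_filter

lemma branch_subset (u : V) : branch F P u ⊆ F \ P :=
  filter_subset _ _

lemma reachable_of_mem_branch {e : Sym2 V} (he : e ∈ branch F P u) {z : V} (hz : z ∈ e) :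
    (edgeGraph (F \ P)).Reachable u z := by
  obtain ⟨heFP, y, hy, huy⟩ := mem_branch.1 he
  exact huy.trans (edgeGraph_reachable_of_mem heFP hy hz)

lemma mem_branch_of_mem_edges {a : V} (w : (edgeGraph (F \ P)).Walk u a) {e : Sym2 V}
    (he : e ∈ w.edges) : e ∈ branch F P u := by
  refine mem_branch.2 ⟨(mem_edgeSet_edgeGraph.1 (w.edges_subset_edgeSet he)).1, ?_⟩
  induction e with
  | h b c =>
    exact ⟨b, Sym2.mem_mk_left b c, ⟨w.takeUntil b (w.fst_mem_support_of_mem_edges he)⟩⟩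

lemma branch_reachable {a : V} (ha : a ∈ edgeSupp (branch F P u)) :
    (edgeGraph (branch F P u)).Reachable u a := by
  obtain ⟨e, he, hae⟩ := mem_edgeSupp.1 ha
  obtain ⟨w⟩ := reachable_of_mem_branch he hae
  exact ⟨w.transfer _ fun e' he' => mem_edgeSet_edgeGraph.2
    ⟨mem_branch_of_mem_edges w he', (mem_edgeSet_edgeGraph.1 (w.edges_subset_edgeSet he')).2⟩⟩

lemma mem_edgeSupp_branch (h : (branch F P u).Nonempty) : u ∈ edgeSupp (branch F P u) := by
  obtain ⟨e, he⟩ := h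
  obtain ⟨z, hz, ⟨w⟩⟩ := (mem_branch.1 he).2
  cases w with
  | nil => exact mem_edgeSupp.2 ⟨e, he, hz⟩
  | cons h w' =>
    exact mem_edgeSupp.2 ⟨_, mem_branch_of_mem_edges (.cons h w') List.mem_cons_self,
      Sym2.mem_mk_left _ _⟩

lemma branch_mem_insert_rootedTrees {H : SimpleGraph V} (hac : (edgeGraph F).IsAcyclic)
    (hH : ↑(F \ P) ⊆ H.edgeSet) (u : V) : branch F P u ∈ insert ∅ (rootedTrees H u) := by
  rcases (branch F P u).eq_empty_or_nonempty with h | h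
  · exact h ▸ mem_insert_self _ _
  refine mem_insert_of_mem (mem_rootedTrees.2 ⟨⟨fun e he => ?_, ?_, ?_⟩, mem_edgeSupp_branch h⟩)
  · exact mem_edgeFinset.2 (hH (branch_subset u he))
  · exact hac.anti (edgeGraph_mono ((branch_subset u).trans sdiff_subset))
  · exact fun a ha b hb => (branch_reachable ha).symm.trans (branch_reachable hb)

/-- An edge common to both branches would give a `u`–`u'` path in the tree `F` avoiding `P`,
next to the one inside `P`. -/
lemma disjoint_branch (hac : (edgeGraph F).IsAcyclic) (hPF : P ⊆ F) {u' : V} (hne : u ≠ u')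
    (hP : (edgeGraph P).Reachable u u') : Disjoint (branch F P u) (branch F P u') := by
  refine disjoint_left.2 fun e he he' => ?_
  obtain ⟨z, hz, -⟩ := (mem_branch.1 he).2
  obtain ⟨w⟩ := (reachable_of_mem_branch he hz).trans (reachable_of_mem_branch he' hz).symm
  obtain ⟨q⟩ := hP
  set p := (q.mapLe (edgeGraph_mono hPF)).toPath
  have hp := (hac.subsingleton_path u u').elim p
    (w.mapLe (edgeGraph_mono sdiff_subset)).toPath
  obtain ⟨e₀, he₀⟩ := List.exists_mem_of_ne_nil _
    (Walk.edges_eq_nil.not.2 (Walk.not_nil_of_ne (p := p.1) hne))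
  have h₁ : e₀ ∈ P := by
    have := Walk.edges_toPath_subset_edges _ he₀
    rw [Walk.edges_mapLe_eq_edges] at this
    exact (mem_edgeSet_edgeGraph.1 (q.edges_subset_edgeSet this)).1
  have h₂ : e₀ ∈ F \ P := by
    rw [hp] at he₀
    have := Walk.edges_toPath_subset_edges _ he₀
    rw [Walk.edges_mapLe_eq_edges] at this
    exact (mem_edgeSet_edgeGraph.1 (w.edges_subset_edgeSet this)).1
  exact (mem_sdiff.1 h₂).2 h₁

omit [Fintype V] in
lemma exists_reachable_sdiff_of_walk (hPR : ∀ e ∈ P, ∀ z ∈ e, z ∈ R) {a r : V}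
    (w : (edgeGraph F).Walk a r) (hr : r ∈ R) :
    ∃ u ∈ R, (edgeGraph (F \ P)).Reachable u a := by
  induction w with
  | nil => exact ⟨_, hr, .refl _⟩
  | @cons a c _ h w ih =>
    obtain ⟨u, huR, hu⟩ := ih hr
    obtain ⟨hacF, hne⟩ := edgeGraph_adj.1 h
    by_cases hP : s(a, c) ∈ P
    · exact ⟨a, hPR _ hP a (Sym2.mem_mk_left a c), .refl _⟩
    · have hca : (edgeGraph (F \ P)).Adj c a := (edgeGraph_adj.2 ⟨mem_sdiff.2 ⟨hacF, hP⟩, hne⟩).symm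
      exact ⟨u, huR, hu.trans hca.reachable⟩

lemma eq_union_biUnion_branch
    (hconn : ∀ a ∈ edgeSupp F, ∀ b ∈ edgeSupp F, (edgeGraph F).Reachable a b) (hPF : P ⊆ F)
    (hP : P.Nonempty) (hPR : ∀ e ∈ P, ∀ z ∈ e, z ∈ R) : F = P ∪ R.biUnion (branch F P) := by
  refine Subset.antisymm (fun e heF => ?_) (union_subset hPF (biUnion_subset.2 fun u _ =>
    (branch_subset u).trans sdiff_subset))
  by_cases heP : e ∈ P
  · exact mem_union_left _ heP
  obtain ⟨e₀, he₀⟩ := hP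
  obtain ⟨r, hr⟩ : ∃ r, r ∈ e₀ := e₀.ind fun a b => ⟨a, Sym2.mem_mk_left a b⟩
  obtain ⟨a, ha⟩ : ∃ a, a ∈ e := e.ind fun a b => ⟨a, Sym2.mem_mk_left a b⟩
  obtain ⟨w⟩ := hconn a (mem_edgeSupp.2 ⟨e, heF, ha⟩) r (mem_edgeSupp.2 ⟨e₀, hPF he₀, hr⟩)
  obtain ⟨u, huR, hu⟩ := exists_reachable_sdiff_of_walk hPR w (hPR e₀ he₀ r hr)
  exact mem_union_right _
    (mem_biUnion.2 ⟨u, huR, mem_branch.2 ⟨mem_sdiff.2 ⟨heF, heP⟩, a, ha, hu⟩⟩)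

lemma card_eq_add_sum_card_branch (hac : (edgeGraph F).IsAcyclic)
    (hconn : ∀ a ∈ edgeSupp F, ∀ b ∈ edgeSupp F, (edgeGraph F).Reachable a b) (hPF : P ⊆ F)
    (hP : P.Nonempty) (hPR : ∀ e ∈ P, ∀ z ∈ e, z ∈ R)
    (hRP : ∀ u ∈ R, ∀ u' ∈ R, (edgeGraph P).Reachable u u') :
    #F = #P + ∑ u ∈ R, #(branch F P u) := by
  have hdisj : Disjoint P (R.biUnion (branch F P)) :=
    (disjoint_biUnion_right _ _ _).2 fun u _ =>
      disjoint_of_subset_right (branch_subset u) disjoint_sdiff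
  conv_lhs => rw [eq_union_biUnion_branch hconn hPF hP hPR]
  rw [card_union_of_disjoint hdisj, card_biUnion fun u hu u' hu' hne =>
    disjoint_branch hac hPF hne (hRP u hu u' hu')]

end Branch

/-- A tree containing the connected core `P` is determined by its branches at the vertices `R`
of `P`, each empty or a subtree rooted there. -/
theorem sum_pow_card_le_of_core {G H : SimpleGraph V} {x : ℝ} (hx : 0 ≤ x)
    {s : Finset (Finset (Sym2 V))} {P : Finset (Sym2 V)} {R : Finset V} (hP : P.Nonempty)
    (hPR : ∀ e ∈ P, ∀ z ∈ e, z ∈ R) (hRP : ∀ u ∈ R, ∀ u' ∈ R, (edgeGraph P).Reachable u u')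
    (hs : ∀ F ∈ s, IsSubtree G F ∧ P ⊆ F ∧ ↑(F \ P) ⊆ H.edgeSet) :
    ∑ F ∈ s, x ^ #F ≤ x ^ #P * ∏ u ∈ R, (1 + rootedTreeSum H u x) := by
  set g : Finset (Sym2 V) → ∀ u ∈ R, Finset (Sym2 V) := fun F u _ => branch F P u
  have hweight : ∀ F ∈ s, x ^ #F = x ^ #P * ∏ u ∈ R.attach, x ^ #(g F u u.2) := fun F hF => by
    obtain ⟨⟨-, hac, hconn⟩, hPF, -⟩ := hs F hF
    rw [card_eq_add_sum_card_branch hac hconn hPF hP hPR hRP, pow_add, ← prod_pow_eq_pow_sum,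
      ← prod_attach]
  have hinj : Set.InjOn g s := fun F hF F' hF' hgF => by
    obtain ⟨⟨-, -, hconn⟩, hPF, -⟩ := hs F hF
    obtain ⟨⟨-, -, hconn'⟩, hPF', -⟩ := hs F' hF'
    rw [eq_union_biUnion_branch hconn hPF hP hPR, eq_union_biUnion_branch hconn' hPF' hP hPR]
    exact congrArg (P ∪ ·) (biUnion_congr rfl fun u hu => congrFun (congrFun hgF u) hu)
  calc ∑ F ∈ s, x ^ #F = ∑ F ∈ s, x ^ #P * ∏ u ∈ R.attach, x ^ #(g F u u.2) :=
        sum_congr rfl hweight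
    _ = ∑ b ∈ s.image g, x ^ #P * ∏ u ∈ R.attach, x ^ #(b u u.2) := by
        rw [sum_image hinj]
    _ ≤ ∑ b ∈ R.pi fun u => insert ∅ (rootedTrees H u),
          x ^ #P * ∏ u ∈ R.attach, x ^ #(b u u.2) := by
        refine sum_le_sum_of_subset_of_nonneg
          (image_subset_iff.2 fun F hF => mem_pi.2 fun u _ => ?_) fun _ _ _ => by positivity
        obtain ⟨⟨-, hac, -⟩, -, hH⟩ := hs F hF
        exact branch_mem_insert_rootedTrees hac hH u
    _ = x ^ #P * ∏ u ∈ R, (1 + rootedTreeSum H u x) := by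
        simp_rw [← sum_insert_empty_rootedTrees (G := H), prod_sum, mul_sum]

noncomputable def edgeNeighbors (G : SimpleGraph V) (v : V) (F : Finset (Sym2 V)) : Finset V :=
  (G.neighborFinset v).filter fun w => s(v, w) ∈ F

def starEdges (v : V) (A : Finset V) : Finset (Sym2 V) :=
  A.image fun w => s(v, w)

section Star

variable {v : V} {A : Finset V}

section

omit [Fintype V]

lemma card_starEdges : #(starEdges v A) = #A :=
  card_image_of_injective _ fun _ _ => Sym2.congr_right.1

lemma mem_insert_of_mem_starEdges {e : Sym2 V} (he : e ∈ starEdges v A) {z : V} (hz : z ∈ e) :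
    z ∈ insert v A := by
  obtain ⟨w, hw, rfl⟩ := mem_image.1 he
  rcases Sym2.mem_iff.1 hz with rfl | rfl
  · exact mem_insert_self _ _
  · exact mem_insert_of_mem hw

lemma edgeGraph_starEdges_reachable {u u' : V} (hu : u ∈ insert v A) (hu' : u' ∈ insert v A) :
    (edgeGraph (starEdges v A)).Reachable u u' := by
  have hv : ∀ w ∈ insert v A, (edgeGraph (starEdges v A)).Reachable v w := fun w hw => by
    rcases mem_insert.1 hw with rfl | hw
    · rfl
    · exact edgeGraph_reachable_of_mem (mem_image_of_mem _ hw) (Sym2.mem_mk_left v w)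
        (Sym2.mem_mk_right v w)
  exact (hv u hu).symm.trans (hv u' hu')

end

variable {G : SimpleGraph V} {F : Finset (Sym2 V)}

lemma starEdges_subset (hF : edgeNeighbors G v F = A) : starEdges v A ⊆ F := by
  intro _ he
  obtain ⟨w, hw, rfl⟩ := mem_image.1 he
  rw [← hF] at hw
  exact (mem_filter.1 hw).2

lemma sdiff_starEdges_subset (hFG : F ⊆ G.edgeFinset) (hF : edgeNeighbors G v F = A) :
    ↑(F \ starEdges v A) ⊆ (G.deleteIncidenceSet v).edgeSet := by
  intro e he
  obtain ⟨heF, heA⟩ := mem_sdiff.1 he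
  rw [edgeSet_deleteIncidenceSet]
  refine ⟨mem_edgeFinset.1 (hFG heF), fun ⟨_, hve⟩ => heA ?_⟩
  obtain ⟨w, rfl⟩ := Sym2.mem_iff_exists.1 hve
  exact mem_image_of_mem _ (hF ▸ mem_filter.2 ⟨by simpa using hFG heF, heF⟩)

end Star

section RootedBound

variable {G : SimpleGraph V} {v : V} {x α : ℝ}

lemma sum_fiber_edgeNeighbors_le (hx : 0 ≤ x) {A : Finset V} (hA : A ⊆ G.neighborFinset v)
    (hAne : A.Nonempty) (ih : ∀ u, rootedTreeSum (G.deleteIncidenceSet v) u x ≤ α - 1) :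
    ∑ F ∈ rootedTrees G v with edgeNeighbors G v F = A, x ^ #F ≤ (x * α) ^ #A := by
  have hvA : v ∉ A := fun h => G.loopless.irrefl v (by simpa using hA h)
  have hv : rootedTreeSum (G.deleteIncidenceSet v) v x = 0 := by
    rw [rootedTreeSum, rootedTrees_eq_empty fun w h => (deleteIncidenceSet_adj.1 h).2.1 rfl,
      sum_empty]
  have hcore := sum_pow_card_le_of_core (H := G.deleteIncidenceSet v) (P := starEdges v A)
    (R := insert v A) hx (hAne.image _)
    (fun _ he _ hz => mem_insert_of_mem_starEdges he hz)
    (fun _ hu _ hu' => edgeGraph_starEdges_reachable hu hu')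
    (s := {F ∈ rootedTrees G v | edgeNeighbors G v F = A}) fun F hF => by
      obtain ⟨hFt, hFA⟩ := mem_filter.1 hF
      have hT := (mem_rootedTrees.1 hFt).1
      exact ⟨hT, starEdges_subset hFA, sdiff_starEdges_subset hT.1 hFA⟩
  refine hcore.trans ?_
  rw [prod_insert hvA, hv, add_zero, one_mul, card_starEdges, mul_pow]
  gcongr
  exact prod_one_add_rootedTreeSum_le hx ih A

lemma rootedTreeSum_le_of_deleteIncidenceSet {Δ : ℕ} (hx : 0 ≤ x) (hα : 0 ≤ α)
    (hdeg : G.degree v ≤ Δ) (ih : ∀ u, rootedTreeSum (G.deleteIncidenceSet v) u x ≤ α - 1) :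
    rootedTreeSum G v x ≤ (1 + x * α) ^ Δ - 1 := by
  have hmaps : ∀ F ∈ rootedTrees G v,
      edgeNeighbors G v F ∈ (G.neighborFinset v).powerset.erase ∅ := fun F hF => by
    obtain ⟨⟨hFG, -⟩, hvF⟩ := mem_rootedTrees.1 hF
    obtain ⟨e, he, hve⟩ := mem_edgeSupp.1 hvF
    obtain ⟨w, rfl⟩ := Sym2.mem_iff_exists.1 hve
    exact mem_erase.2 ⟨ne_empty_of_mem (a := w) (mem_filter.2 ⟨by simpa using hFG he, he⟩),
      mem_powerset.2 (filter_subset _ _)⟩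
  calc rootedTreeSum G v x
      = ∑ A ∈ (G.neighborFinset v).powerset.erase ∅,
          ∑ F ∈ rootedTrees G v with edgeNeighbors G v F = A, x ^ #F :=
        (sum_fiberwise_of_maps_to hmaps _).symm
    _ ≤ ∑ A ∈ (G.neighborFinset v).powerset.erase ∅, (x * α) ^ #A := sum_le_sum fun A hA => by
        obtain ⟨hA0, hA⟩ := mem_erase.1 hA
        exact sum_fiber_edgeNeighbors_le hx (mem_powerset.1 hA) (nonempty_iff_ne_empty.2 hA0) ih
    _ = (1 + x * α) ^ G.degree v - 1 := by
        have := sum_pow_mul_eq_add_pow (x * α) 1 (G.neighborFinset v)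
        simp only [one_pow, mul_one, card_neighborFinset_eq_degree] at this
        rw [sum_erase_eq_sub (empty_mem_powerset _), this, card_empty, pow_zero, add_comm]
    _ ≤ (1 + x * α) ^ Δ - 1 := by
        gcongr
        · exact le_add_of_nonneg_right (mul_nonneg hx hα)

theorem rootedTreeSum_le {Δ : ℕ} (hx : 0 ≤ x) (hα : 1 ≤ α) (hxα : (1 + x * α) ^ Δ ≤ α)
    (G : SimpleGraph V) (hdeg : ∀ w, G.degree w ≤ Δ) (v : V) : rootedTreeSum G v x ≤ α - 1 := by
  induction hn : #G.edgeFinset using Nat.strong_induction_on generalizing G v with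
  | _ n ih =>
  by_cases hv : ∀ w, ¬ G.Adj v w
  · rw [rootedTreeSum, rootedTrees_eq_empty hv, sum_empty]
    linarith
  obtain ⟨w, hw⟩ := not_forall_not.1 hv
  have hlt : #(G.deleteIncidenceSet v).edgeFinset < n := by
    have hdeg_pos := (G.degree_pos_iff_exists_adj v).2 ⟨w, hw⟩
    have hn_pos : 0 < n := hn ▸ card_pos.2 ⟨s(v, w), by simpa using hw⟩
    rw [card_edgeFinset_deleteIncidenceSet, hn]
    omega
  have hdeg' : ∀ u, (G.deleteIncidenceSet v).degree u ≤ Δ := fun u =>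
    (degree_le_of_le (deleteIncidenceSet_le G v)).trans (hdeg u)
  -- `convert` reconciles the classical and the library `DecidableRel` instances of the smaller graph
  have ih' := fun u => ih _ hlt (G.deleteIncidenceSet v) (fun u => by convert hdeg' u) u
    (by convert rfl)
  exact (rootedTreeSum_le_of_deleteIncidenceSet hx (by linarith) (hdeg v) ih').trans
    (by linarith)

end RootedBound

section TwoRooted

variable {G : SimpleGraph V}

lemma sum_paths_le_sum_walks (f : ℕ → ℝ) (hf : ∀ n, 0 ≤ f n) (u v : V) :
    ∑ p : G.Path u v, f p.1.length ≤
      ∑ n ∈ range (Fintype.card V), #(G.finsetWalkLength n u v) * f n := by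
  calc ∑ p : G.Path u v, f p.1.length
      = ∑ n ∈ range (Fintype.card V), ∑ p : G.Path u v with p.1.length = n, f p.1.length :=
        (sum_fiberwise_of_maps_to (fun p _ => mem_range.2 p.2.length_lt) _).symm
    _ = ∑ n ∈ range (Fintype.card V), #{p : G.Path u v | p.1.length = n} * f n :=
        sum_congr rfl fun n _ => by
          rw [sum_congr rfl fun p hp => congrArg f (mem_filter.1 hp).2, sum_const, nsmul_eq_mul]
    _ ≤ _ := sum_le_sum fun n _ => by
        gcongr
        · exact hf n
        · exact card_le_card_of_injOn Subtype.val
            (fun p hp => mem_finsetWalkLength_iff.2 (mem_filter.1 hp).2) Subtype.val_injective.injOn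

lemma card_finsetWalkLength_succ_le {Δ : ℕ} (hdeg : ∀ w, G.degree w ≤ Δ) (n : ℕ) (u v : V) :
    #(G.finsetWalkLength (n + 1) u v) ≤ Δ ^ n := by
  induction n generalizing u with
  | zero =>
    refine card_le_one.2 fun p hp q hq => ?_
    rw [mem_finsetWalkLength_iff] at hp hq
    match p, q, hp, hq with
    | .cons _ .nil, .cons _ .nil, _, _ => rfl
  | succ n ih =>
    calc #(G.finsetWalkLength (n + 2) u v)
        ≤ ∑ w : G.neighborSet u, #(G.finsetWalkLength (n + 1) w v) := by
          rw [finsetWalkLength]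
          exact card_biUnion_le.trans (sum_le_sum fun w _ => (card_map _).le)
      _ ≤ ∑ w : G.neighborSet u, Δ ^ n := sum_le_sum fun w _ => ih w
      _ = G.degree u * Δ ^ n := by
          rw [sum_const, card_univ, card_neighborSet_eq_degree, smul_eq_mul]
      _ ≤ Δ ^ (n + 1) := by
          rw [pow_succ']
          exact Nat.mul_le_mul_right _ (hdeg u)

variable {u v : V}

omit [Fintype V] in
lemma reachable_edgeGraph_edges (p : G.Walk u v) {z : V} (hz : z ∈ p.support) :
    (edgeGraph p.edges.toFinset).Reachable u z := by
  have hp : ∀ e ∈ p.edges, e ∈ (edgeGraph p.edges.toFinset).edgeSet := fun e he =>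
    mem_edgeSet_edgeGraph.2
      ⟨List.mem_toFinset.2 he, G.not_isDiag_of_mem_edgeSet (p.edges_subset_edgeSet he)⟩
  exact ⟨(p.transfer _ hp).takeUntil z (by rwa [Walk.support_transfer])⟩

lemma exists_path_edges_subset {F : Finset (Sym2 V)} (hF : IsSubtree G F) (hu : u ∈ edgeSupp F)
    (hv : v ∈ edgeSupp F) : ∃ p : G.Path u v, p.1.edges.toFinset ⊆ F := by
  obtain ⟨q⟩ := hF.2.2 u hu v hv
  refine ⟨⟨q.toPath.1.mapLe (edgeGraph_le hF.1), q.toPath.2.mapLe _⟩, fun e he => ?_⟩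
  rw [List.mem_toFinset, Walk.edges_mapLe_eq_edges] at he
  exact (mem_edgeSet_edgeGraph.1 (q.toPath.1.edges_subset_edgeSet he)).1

variable {x α : ℝ}

lemma sum_pow_card_le_of_path (hx : 0 ≤ x) (hroot : ∀ u, rootedTreeSum G u x ≤ α - 1)
    (huv : u ≠ v) (p : G.Path u v) {s : Finset (Finset (Sym2 V))}
    (hs : ∀ F ∈ s, IsSubtree G F) :
    ∑ F ∈ s with p.1.edges.toFinset ⊆ F, x ^ #F ≤ x ^ p.1.length * α ^ (p.1.length + 1) := by
  obtain ⟨p, hp⟩ := p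
  have hP : p.edges.toFinset.Nonempty := by
    obtain ⟨e, he⟩ := List.exists_mem_of_ne_nil _ (Walk.edges_eq_nil.not.2 (Walk.not_nil_of_ne huv))
    exact ⟨e, List.mem_toFinset.2 he⟩
  have hR : ∀ w ∈ p.support.toFinset, (edgeGraph p.edges.toFinset).Reachable u w :=
    fun w hw => reachable_edgeGraph_edges p (List.mem_toFinset.1 hw)
  have hcore := sum_pow_card_le_of_core (H := G) (P := p.edges.toFinset) (R := p.support.toFinset)
    hx hP (fun e he z hz => List.mem_toFinset.2 (Walk.mem_support_of_mem_edges
      (List.mem_toFinset.1 he) hz)) (fun w hw w' hw' => (hR w hw).symm.trans (hR w' hw'))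
    (s := {F ∈ s | p.edges.toFinset ⊆ F}) fun F hF => by
      obtain ⟨hFs, hpF⟩ := mem_filter.1 hF
      exact ⟨hs F hFs, hpF, fun e he => mem_edgeFinset.1 ((hs F hFs).1 (mem_sdiff.1 he).1)⟩
  refine hcore.trans ?_
  rw [List.toFinset_card_of_nodup hp.edges_nodup, Walk.length_edges, ← Walk.length_support,
    ← List.toFinset_card_of_nodup hp.support_nodup]
  gcongr
  exact prod_one_add_rootedTreeSum_le hx hroot _

lemma treeSum2_le_sum_paths (hx : 0 ≤ x) (hroot : ∀ u, rootedTreeSum G u x ≤ α - 1)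
    (huv : u ≠ v) :
    treeSum2 G u v x ≤ ∑ p : G.Path u v, x ^ p.1.length * α ^ (p.1.length + 1) := by
  set s := G.edgeFinset.powerset.filter fun F => IsSubtree G F ∧ u ∈ edgeSupp F ∧ v ∈ edgeSupp F
  calc treeSum2 G u v x = ∑ F ∈ s, x ^ #F := rfl
    _ ≤ ∑ F ∈ s, ∑ p : G.Path u v with p.1.edges.toFinset ⊆ F, x ^ #F :=
        sum_le_sum fun F hF => by
          obtain ⟨hF, hu, hv⟩ := (mem_filter.1 hF).2
          obtain ⟨p, hp⟩ := exists_path_edges_subset hF hu hv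
          exact single_le_sum (f := fun _ => x ^ #F) (fun _ _ => pow_nonneg hx _)
            (mem_filter.2 ⟨mem_univ p, hp⟩)
    _ = ∑ p : G.Path u v, ∑ F ∈ s with p.1.edges.toFinset ⊆ F, x ^ #F := by
        simp_rw [sum_filter]
        exact sum_comm
    _ ≤ _ := sum_le_sum fun p _ =>
        sum_pow_card_le_of_path hx hroot huv p fun F hF => (mem_filter.1 hF).2.1

theorem treeSum2_le_geom {Δ : ℕ} (hΔ : 0 < Δ) (hdeg : ∀ w, G.degree w ≤ Δ) (hx : 0 ≤ x)
    (hroot : ∀ u, rootedTreeSum G u x ≤ α - 1) (huv : u ≠ v) :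
    treeSum2 G u v x ≤ α / Δ * ∑ n ∈ Ico 1 (Fintype.card V), (x * α * Δ) ^ n := by
  have hα : 0 ≤ α := by linarith [hroot u, rootedTreeSum_nonneg (G := G) (v := u) hx]
  have hW₀ : G.finsetWalkLength 0 u v = ∅ := by simp [finsetWalkLength, huv]
  calc treeSum2 G u v x ≤ ∑ p : G.Path u v, x ^ p.1.length * α ^ (p.1.length + 1) :=
        treeSum2_le_sum_paths hx hroot huv
    _ ≤ ∑ n ∈ range (Fintype.card V), #(G.finsetWalkLength n u v) * (x ^ n * α ^ (n + 1)) :=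
        sum_paths_le_sum_walks (fun n => x ^ n * α ^ (n + 1)) (fun n => by positivity) u v
    _ = ∑ n ∈ Ico 1 (Fintype.card V), #(G.finsetWalkLength n u v) * (x ^ n * α ^ (n + 1)) := by
        refine (sum_subset (fun n hn => mem_range.2 (mem_Ico.1 hn).2) fun n hn hn' => ?_).symm
        obtain rfl : n = 0 := by simp_all
        simp [hW₀]
    _ ≤ ∑ n ∈ Ico 1 (Fintype.card V), α / Δ * (x * α * Δ) ^ n := sum_le_sum fun n hn => by
        obtain ⟨k, rfl⟩ := Nat.exists_eq_add_of_le' (mem_Ico.1 hn).1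
        calc (#(G.finsetWalkLength (k + 1) u v) : ℝ) * (x ^ (k + 1) * α ^ (k + 1 + 1))
            ≤ (Δ : ℝ) ^ k * (x ^ (k + 1) * α ^ (k + 1 + 1)) := by
              gcongr
              exact_mod_cast card_finsetWalkLength_succ_le hdeg k u v
          _ = α / Δ * (x * α * Δ) ^ (k + 1) := by
              field_simp
              ring
    _ = _ := (mul_sum ..).symm

end TwoRooted

/-- For a graph of maximum degree at most `Δ ≥ 1`, distinct vertices `v₁, v₂` and
`α ∈ [1, e)`, `T_{G,v₁,v₂}(ln α/(αΔ)) ≤ α ln α / (Δ(1 - ln α))`. -/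
theorem treeSum2_le (G : SimpleGraph V) (Δ : ℕ) (hΔ : 1 ≤ Δ)
    (hdeg : ∀ w : V, G.degree w ≤ Δ) (v₁ v₂ : V) (hne : v₁ ≠ v₂)
    (α : ℝ) (hα : 1 ≤ α) (hα' : α < Real.exp 1) :
    treeSum2 G v₁ v₂ (Real.log α / (α * Δ)) ≤
      α * Real.log α / (Δ * (1 - Real.log α)) := by
  set r := Real.log α
  have hΔ₀ : (0 : ℝ) < Δ := by exact_mod_cast hΔ
  have hr₀ : 0 ≤ r := Real.log_nonneg hα
  have hr₁ : r < 1 := by simpa using Real.log_lt_log (by linarith) hα'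
  have hx : 0 ≤ r / (α * Δ) := by positivity
  have hxα_eq : r / (α * Δ) * α = r / Δ := by field_simp
  have hxα : (1 + r / (α * Δ) * α) ^ Δ ≤ α := by
    have h := Real.one_sub_div_pow_le_exp_neg (n := Δ) (t := -r) (by linarith)
    rwa [neg_neg, Real.exp_log (by linarith), neg_div, sub_neg_eq_add, ← hxα_eq] at h
  have hroot := rootedTreeSum_le hx hα hxα G hdeg
  calc treeSum2 G v₁ v₂ (r / (α * Δ)) ≤ α / Δ * ∑ n ∈ Ico 1 (Fintype.card V), r ^ n := by
        simpa only [hxα_eq, div_mul_cancel₀ _ hΔ₀.ne'] using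
          treeSum2_le_geom (by omega) hdeg hx hroot hne
    _ ≤ α / Δ * (r ^ 1 / (1 - r)) := by
        gcongr
        exact geom_sum_Ico_le_of_lt_one hr₀ hr₁
    _ = α * r / (Δ * (1 - r)) := by
        field_simp
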